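/- Let A ∈ ℂ^{n1×n2×n3} and G ∈ ℂ^{n2×n1×n3}. If A is invertible along G, then the inverse of A along G is unique; that is, if X1 and X2 are both inverses of A along G, then X1 = X2. -/

import Mathlib

noncomputable section

/-- A third-order tensor: a family of frontal slices. -/
abbrev Tensor (n1 n2 n3 : ℕ) : Type := Fin n3 → Matrix (Fin n1) (Fin n2) ℂ

namespace Tensor

/-- The block Toeplitz-plus-Hankel matrix `mat(A)` associated to a tensor. -/
def matT {n1 n2 n3 : ℕ} (A : Tensor n1 n2 n3) :
    Matrix (Fin n3 × Fin n1) (Fin n3 × Fin n2) ℂ := fun p q =>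
  A ⟨p.1.1 - q.1.1 + (q.1.1 - p.1.1), by
        have h1 := p.1.isLt; have h2 := q.1.isLt; omega⟩ p.2 q.2 +
    (if h : p.1.1 + q.1.1 + 2 ≤ n3 then A ⟨p.1.1 + q.1.1 + 1, by omega⟩ p.2 q.2
     else if h2 : n3 ≤ p.1.1 + q.1.1 then
       A ⟨2 * n3 - (p.1.1 + q.1.1) - 1, by have h1 := p.1.isLt; omega⟩ p.2 q.2
     else 0)

/-- `ten`, the inverse of `mat` on its range: the slices of a tensor are recovered
from the first block-column of its `mat` by an alternating sum. -/
def tenT {n1 n2 n3 : ℕ} (M : Matrix (Fin n3 × Fin n1) (Fin n3 × Fin n2) ℂ) :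
    Tensor n1 n2 n3 := fun i => Matrix.of fun a b =>
  ∑ t : Fin n3, if i.1 ≤ t.1 then (-1 : ℂ) ^ (t.1 - i.1) * M (t, a) (⟨0, i.pos⟩, b) else 0

/-- The C-product of two tensors: the unique tensor whose `mat` is `mat(A) * mat(B)`. -/
def cmul {n1 n2 l n3 : ℕ} (A : Tensor n1 n2 n3) (B : Tensor n2 l n3) : Tensor n1 l n3 :=
  tenT (matT A * matT B)

/-- The conjugate transpose of a tensor, taken slice-wise. -/
def conjT {n1 n2 n3 : ℕ} (A : Tensor n1 n2 n3) : Tensor n2 n1 n3 := fun i => (A i).conjTranspose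

/-- The identity tensor: the tensor whose `mat` is the identity matrix. -/
def idT {n n3 : ℕ} : Tensor n n n3 := fun i => if i.1 = 0 then 1 else 0

/-- A tensor is unitary if `Qᴴ *c Q = Q *c Qᴴ = I`. -/
def Unitary {n n3 : ℕ} (Q : Tensor n n n3) : Prop :=
  cmul (conjT Q) Q = idT ∧ cmul Q (conjT Q) = idT

/-- `X` is the inverse of the square tensor `B` under the C-product. -/
def IsInverse {n n3 : ℕ} (B X : Tensor n n n3) : Prop :=
  cmul B X = idT ∧ cmul X B = idT

/-- `X` is the Moore-Penrose inverse of `A` under the C-product. -/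
def IsMP {n1 n2 n3 : ℕ} (A : Tensor n1 n2 n3) (X : Tensor n2 n1 n3) : Prop :=
  cmul (cmul A X) A = A ∧ cmul (cmul X A) X = X ∧
    conjT (cmul A X) = cmul A X ∧ conjT (cmul X A) = cmul X A

/-- Powers of a square tensor with respect to the C-product. -/
def cpow {n n3 : ℕ} (A : Tensor n n n3) : ℕ → Tensor n n n3
  | 0 => idT
  | m + 1 => cmul (cpow A m) A

/-- `ind(A) = k`: `k` is the smallest nonnegative integer with
`rank(mat(A)^k) = rank(mat(A)^(k+1))`. -/
def IsIndex {n n3 : ℕ} (A : Tensor n n n3) (k : ℕ) : Prop :=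
  (matT A ^ k).rank = (matT A ^ (k + 1)).rank ∧
    ∀ j < k, (matT A ^ j).rank ≠ (matT A ^ (j + 1)).rank

/-- `X` is the Drazin inverse of `A` (of index `k`) under the C-product. -/
def IsDrazin {n n3 : ℕ} (A : Tensor n n n3) (k : ℕ) (X : Tensor n n n3) : Prop :=
  cmul (cpow A (k + 1)) X = cpow A k ∧ cmul (cmul X A) X = X ∧ cmul A X = cmul X A

/-- `X` is an inverse of `A` along `G` under the C-product. -/
def IsInvAlong {n1 n2 n3 : ℕ} (A : Tensor n1 n2 n3) (G X : Tensor n2 n1 n3) : Prop :=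
  cmul (cmul X A) G = G ∧ cmul (cmul G A) X = G ∧
    (∃ U : Tensor n1 n1 n3, X = cmul G U) ∧
    (∃ V : Tensor n2 n2 n3, conjT X = cmul (conjT G) V)

/-- All frontal slices are diagonal. -/
def FDiag {n1 n2 n3 : ℕ} (A : Tensor n1 n2 n3) : Prop :=
  ∀ (i : Fin n3) (a : Fin n1) (b : Fin n2), (a : ℕ) ≠ (b : ℕ) → A i a b = 0

/-- All frontal slices are upper triangular. -/
def FUpper {n1 n2 n3 : ℕ} (A : Tensor n1 n2 n3) : Prop :=
  ∀ (i : Fin n3) (a : Fin n1) (b : Fin n2), (b : ℕ) < (a : ℕ) → A i a b = 0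

/-- All frontal slices are lower triangular. -/
def FLower {n1 n2 n3 : ℕ} (A : Tensor n1 n2 n3) : Prop :=
  ∀ (i : Fin n3) (a : Fin n1) (b : Fin n2), (a : ℕ) < (b : ℕ) → A i a b = 0

/-- Slice-wise 2×2 block tensor `[[A, B],[C, D]]`. -/
def blockT {r s t u n3 : ℕ} (A : Tensor r t n3) (B : Tensor r u n3)
    (C : Tensor s t n3) (D : Tensor s u n3) : Tensor (r + s) (t + u) n3 := fun i =>
  Matrix.reindex finSumFinEquiv finSumFinEquiv (Matrix.fromBlocks (A i) (B i) (C i) (D i))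

/-- The mode-3 product of a tensor with an `n3 × n3` matrix. -/
def mode3 {n1 n2 n3 : ℕ} (A : Tensor n1 n2 n3) (M : Matrix (Fin n3) (Fin n3) ℂ) :
    Tensor n1 n2 n3 := fun l => ∑ i, M l i • A i

end Tensor

open Tensor

/-!
`mat` is injective, multiplicative and compatible with conjugate transposition, so the C-product
is associative and the semigroup argument applies:
`X₁ = Vᴴ G = Vᴴ G A X₂ = X₁ A X₂ = X₁ A G U = G U = X₂`.

Multiplicativity is the substance. Let `J` be the adjacency matrix of the path on `n3` vertices
with a loop at each end. Each block of `mat A` is `g (i - j) + g (i + j + 1)` with `g` symmetric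
about `0` and about `n3`; letting the indices run over `ℤ`, the loops of `J` act as these
reflections, and `mat A` commutes with `J ⊗ I`. Conversely a matrix commuting with `J ⊗ I` is
determined by its first block column, which `ten` reproduces. Hence the range of `mat` is closed
under products and `mat (ten (mat A * mat B)) = mat A * mat B`.
-/

namespace Tensor

open Matrix
open scoped Kronecker

/-- Truncated subtraction makes `0` its own predecessor: the loop at the left end of the path. -/
def predRefl {m : ℕ} (i : Fin m) : Fin m := ⟨i - 1, by omega⟩

def succRefl {m : ℕ} (i : Fin m) : Fin m := ⟨min (i + 1) (m - 1), by omega⟩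

def reflAdj (m : ℕ) : Matrix (Fin m) (Fin m) ℂ :=
  of fun i t => (if t = predRefl i then 1 else 0) + (if t = succRefl i then 1 else 0)

lemma reflAdj_comm {m : ℕ} (i t : Fin m) : reflAdj m i t = reflAdj m t i := by
  simp only [reflAdj, of_apply, predRefl, succRefl, Fin.ext_iff]
  have := i.isLt
  have := t.isLt
  split_ifs <;> first | omega | norm_num

lemma sum_reflAdj_mul {m : ℕ} (w : Fin m → ℂ) (i : Fin m) :
    ∑ t, reflAdj m i t * w t = w (predRefl i) + w (succRefl i) := by
  simp [reflAdj, add_mul, Finset.sum_add_distrib]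

lemma reflAdj_kronecker_one_mul_apply {m : ℕ} {α β : Type*} [Fintype α] [DecidableEq α]
    (M : Matrix (Fin m × α) β ℂ) (i : Fin m) (a : α) (q : β) :
    ((reflAdj m ⊗ₖ (1 : Matrix α α ℂ)) * M) (i, a) q =
      M (predRefl i, a) q + M (succRefl i, a) q := by
  simp only [mul_apply, kroneckerMap_apply, one_apply, mul_ite, mul_one, mul_zero, ite_mul,
    zero_mul, Fintype.sum_prod_type, Finset.sum_ite_eq, Finset.mem_univ, ↓reduceIte]
  exact sum_reflAdj_mul (fun t => M (t, a) q) i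

lemma mul_reflAdj_kronecker_one_apply {m : ℕ} {α β : Type*} [Fintype α] [DecidableEq α]
    (M : Matrix β (Fin m × α) ℂ) (p : β) (j : Fin m) (a : α) :
    (M * (reflAdj m ⊗ₖ (1 : Matrix α α ℂ))) p (j, a) =
      M p (predRefl j, a) + M p (succRefl j, a) := by
  simp only [mul_apply, kroneckerMap_apply, reflAdj_comm _ j, one_apply, mul_ite, mul_one,
    mul_zero, mul_comm (M p _), ite_mul, zero_mul, Fintype.sum_prod_type, Finset.sum_ite_eq',
    Finset.mem_univ, ↓reduceIte]
  exact sum_reflAdj_mul (fun t => M p (t, a)) j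

/-- Since `reflAdj` has ones on its superdiagonal, the relation at column `j` determines
column `j + 1` from the columns before it. -/
lemma eq_zero_of_reflAdj_kronecker_one_mul_eq {m : ℕ} {α β : Type*} [Fintype α] [DecidableEq α]
    [Fintype β] [DecidableEq β] {D : Matrix (Fin m × α) (Fin m × β) ℂ}
    (hD : (reflAdj m ⊗ₖ (1 : Matrix α α ℂ)) * D = D * (reflAdj m ⊗ₖ (1 : Matrix β β ℂ)))
    (hcol : ∀ p b (hm : 0 < m), D p (⟨0, hm⟩, b) = 0) : D = 0 := by
  suffices h : ∀ j (hj : j < m) p b, D p (⟨j, hj⟩, b) = 0 by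
    ext p ⟨j, b⟩
    exact h j j.2 p b
  intro j
  induction j using Nat.strong_induction_on with
  | _ j ih =>
  intro hj p b
  rcases j with _ | j
  · exact hcol p b hj
  obtain ⟨i, a⟩ := p
  have h := congrFun (congrFun hD (i, a)) (⟨j, by omega⟩, b)
  rw [reflAdj_kronecker_one_mul_apply, mul_reflAdj_kronecker_one_apply,
    ih j (by omega), ih j (by omega)] at h
  have hpred : D (i, a) (predRefl ⟨j, by omega⟩, b) = 0 := ih (j - 1) (by omega) _ _ _
  have hsucc : succRefl (⟨j, by omega⟩ : Fin m) = ⟨j + 1, hj⟩ := by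
    ext
    simp only [succRefl]
    omega
  rw [hpred, hsucc] at h
  simpa using h.symm

/-- Reflects `[-2m, 2m]` onto `[0, m]`, at `0` and at `m`. -/
def foldIndex (m : ℕ) (x : ℤ) : ℕ := min x.natAbs (2 * m - x.natAbs)

def toeplitzPlusHankel (m : ℕ) (v : ℕ → ℂ) (x y : ℤ) : ℂ :=
  v (foldIndex m (x - y)) + v (foldIndex m (x + y + 1))

section ToeplitzPlusHankel

variable (m : ℕ) (v : ℕ → ℂ)

lemma toeplitzPlusHankel_comm (x y : ℤ) :
    toeplitzPlusHankel m v x y = toeplitzPlusHankel m v y x := by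
  unfold toeplitzPlusHankel foldIndex
  congr 3 <;> omega

lemma toeplitzPlusHankel_sub_one_add_add_one (x y : ℤ) :
    toeplitzPlusHankel m v (x - 1) y + toeplitzPlusHankel m v (x + 1) y =
      toeplitzPlusHankel m v x (y - 1) + toeplitzPlusHankel m v x (y + 1) := by
  unfold toeplitzPlusHankel
  ring_nf

lemma toeplitzPlusHankel_neg_one {y : ℤ} (hy : 0 ≤ y) :
    toeplitzPlusHankel m v (-1) y = toeplitzPlusHankel m v 0 y := by
  unfold toeplitzPlusHankel foldIndex
  rw [add_comm]
  congr 2 <;> omega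

lemma toeplitzPlusHankel_size {y : ℤ} (hy : 0 ≤ y) (hym : y < m) :
    toeplitzPlusHankel m v m y = toeplitzPlusHankel m v (m - 1) y := by
  unfold toeplitzPlusHankel foldIndex
  rw [add_comm]
  congr 2 <;> omega

lemma toeplitzPlusHankel_predRefl (i : Fin m) {y : ℤ} (hy : 0 ≤ y) :
    toeplitzPlusHankel m v (predRefl i) y = toeplitzPlusHankel m v (i - 1) y := by
  rcases Nat.eq_zero_or_pos i.1 with h | h
  · simp [predRefl, h, toeplitzPlusHankel_neg_one m v hy]
  · simp [predRefl, Nat.cast_sub h]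

lemma toeplitzPlusHankel_succRefl (i : Fin m) {y : ℤ} (hy : 0 ≤ y) (hym : y < m) :
    toeplitzPlusHankel m v (succRefl i) y = toeplitzPlusHankel m v (i + 1) y := by
  have := i.isLt
  rcases Nat.lt_or_ge (i.1 + 1) m with h | h
  · simp [succRefl, show min (i.1 + 1) (m - 1) = i.1 + 1 by omega]
  · rw [show (i : ℤ) + 1 = m by omega, toeplitzPlusHankel_size m v hy hym]
    simp [succRefl, show min (i.1 + 1) (m - 1) = m - 1 by omega,
      Nat.cast_sub (by omega : 1 ≤ m)]

lemma toeplitzPlusHankel_predRefl_add_succRefl (i j : Fin m) :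
    toeplitzPlusHankel m v (predRefl i) j + toeplitzPlusHankel m v (succRefl i) j =
      toeplitzPlusHankel m v i (predRefl j) + toeplitzPlusHankel m v i (succRefl j) := by
  have hi : (0 : ℤ) ≤ i := by positivity
  have hj : (0 : ℤ) ≤ j := by positivity
  have him : (i : ℤ) < m := by exact_mod_cast i.isLt
  have hjm : (j : ℤ) < m := by exact_mod_cast j.isLt
  rw [toeplitzPlusHankel_predRefl m v i hj, toeplitzPlusHankel_succRefl m v i hj hjm,
    toeplitzPlusHankel_comm m v i, toeplitzPlusHankel_comm m v i,
    toeplitzPlusHankel_predRefl m v j hi, toeplitzPlusHankel_succRefl m v j hi him,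
    toeplitzPlusHankel_comm m v (j - 1), toeplitzPlusHankel_comm m v (j + 1)]
  exact toeplitzPlusHankel_sub_one_add_add_one m v i j

end ToeplitzPlusHankel

/-- The junk value `0` at `k = n3` supplies the zero blocks `H_{ij}`, `i + j = n3 + 1`,
of `mat A`. -/
def sliceEntry {n1 n2 n3 : ℕ} (A : Tensor n1 n2 n3) (a : Fin n1) (b : Fin n2) (k : ℕ) : ℂ :=
  if h : k < n3 then A ⟨k, h⟩ a b else 0

lemma sliceEntry_eq_zero_of_le {n1 n2 n3 : ℕ} (A : Tensor n1 n2 n3) (a : Fin n1) (b : Fin n2)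
    {k : ℕ} (hk : n3 ≤ k) : sliceEntry A a b k = 0 :=
  dif_neg (by omega)

lemma matT_apply {n1 n2 n3 : ℕ} (A : Tensor n1 n2 n3) (i j : Fin n3) (a : Fin n1) (b : Fin n2) :
    matT A (i, a) (j, b) = toeplitzPlusHankel n3 (sliceEntry A a b) i j := by
  have hi := i.isLt
  have hj := j.isLt
  unfold matT toeplitzPlusHankel sliceEntry foldIndex
  dsimp only
  congr 1
  · rw [dif_pos (by omega)]
    congr 2
    omega
  · split_ifs <;> first | (congr 2; omega) | omega | rfl

lemma matT_apply_zero {n1 n2 n3 : ℕ} (A : Tensor n1 n2 n3) (i : Fin n3) (a : Fin n1)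
    (b : Fin n2) (hn : 0 < n3) :
    matT A (i, a) (⟨0, hn⟩, b) = sliceEntry A a b i + sliceEntry A a b (i + 1) := by
  rw [matT_apply]
  unfold toeplitzPlusHankel foldIndex
  have := i.isLt
  congr 2 <;> simp only [Nat.cast_zero, sub_zero, add_zero] <;> omega

lemma reflAdj_kronecker_one_mul_matT {n1 n2 n3 : ℕ} (A : Tensor n1 n2 n3) :
    (reflAdj n3 ⊗ₖ (1 : Matrix (Fin n1) (Fin n1) ℂ)) * matT A =
      matT A * (reflAdj n3 ⊗ₖ (1 : Matrix (Fin n2) (Fin n2) ℂ)) := by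
  ext ⟨i, a⟩ ⟨j, b⟩
  simp only [reflAdj_kronecker_one_mul_apply, mul_reflAdj_kronecker_one_apply, matT_apply]
  exact toeplitzPlusHankel_predRefl_add_succRefl n3 _ i j

def altTail {m : ℕ} (f : Fin m → ℂ) (k : ℕ) : ℂ :=
  ∑ t : Fin m, if k ≤ t.1 then (-1) ^ (t.1 - k) * f t else 0

lemma altTail_add_altTail_succ {m : ℕ} (f : Fin m → ℂ) (k : ℕ) :
    altTail f k + altTail f (k + 1) = if h : k < m then f ⟨k, h⟩ else 0 := by
  have hterm : ∀ t : Fin m, ((if k ≤ t.1 then (-1) ^ (t.1 - k) * f t else 0) +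
      if k + 1 ≤ t.1 then (-1) ^ (t.1 - (k + 1)) * f t else 0) = if t.1 = k then f t else 0 := by
    intro t
    rcases lt_trichotomy t.1 k with h | h | h
    · simp [show ¬ k ≤ t.1 by omega, show ¬ k + 1 ≤ t.1 by omega, h.ne]
    · simp [h]
    · rw [if_pos h.le, if_pos (show k + 1 ≤ t.1 from h), if_neg h.ne',
        show t.1 - k = t.1 - (k + 1) + 1 by omega, pow_succ]
      ring
  rw [altTail, altTail, ← Finset.sum_add_distrib, Finset.sum_congr rfl fun t _ => hterm t]
  split_ifs with hk
  · rw [Finset.sum_eq_single_of_mem ⟨k, hk⟩ (Finset.mem_univ _)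
      fun t _ ht => if_neg fun h => ht (Fin.ext h)]
    simp
  · exact Finset.sum_eq_zero fun t _ => if_neg (by omega)

lemma sliceEntry_tenT {n1 n2 n3 : ℕ} (M : Matrix (Fin n3 × Fin n1) (Fin n3 × Fin n2) ℂ)
    (a : Fin n1) (b : Fin n2) (hn : 0 < n3) (k : ℕ) :
    sliceEntry (tenT M) a b k = altTail (fun t => M (t, a) (⟨0, hn⟩, b)) k := by
  unfold sliceEntry
  split_ifs with hk
  · rfl
  · exact (Finset.sum_eq_zero fun t _ => if_neg (by omega)).symm

lemma matT_tenT_eq_of_mul_eq {n1 n2 n3 : ℕ} {M : Matrix (Fin n3 × Fin n1) (Fin n3 × Fin n2) ℂ}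
    (hM : (reflAdj n3 ⊗ₖ (1 : Matrix (Fin n1) (Fin n1) ℂ)) * M =
      M * (reflAdj n3 ⊗ₖ (1 : Matrix (Fin n2) (Fin n2) ℂ))) :
    matT (tenT M) = M := by
  refine sub_eq_zero.mp (eq_zero_of_reflAdj_kronecker_one_mul_eq ?_ ?_)
  · rw [Matrix.mul_sub, Matrix.sub_mul, hM, reflAdj_kronecker_one_mul_matT]
  · rintro ⟨i, a⟩ b hn
    rw [Matrix.sub_apply, matT_apply_zero, sliceEntry_tenT M a b hn, sliceEntry_tenT M a b hn,
      altTail_add_altTail_succ, dif_pos i.isLt, sub_self]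

lemma matT_cmul {n1 n2 l n3 : ℕ} (A : Tensor n1 n2 n3) (B : Tensor n2 l n3) :
    matT (cmul A B) = matT A * matT B :=
  matT_tenT_eq_of_mul_eq <| by
    rw [← Matrix.mul_assoc, reflAdj_kronecker_one_mul_matT, Matrix.mul_assoc,
      reflAdj_kronecker_one_mul_matT, Matrix.mul_assoc]

lemma eq_of_add_succ_eq {m : ℕ} {u w : ℕ → ℂ} (hu : ∀ k, m ≤ k → u k = 0)
    (hw : ∀ k, m ≤ k → w k = 0) (h : ∀ k < m, u k + u (k + 1) = w k + w (k + 1)) : u = w := by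
  suffices key : ∀ d k, m ≤ k + d → u k = w k from funext fun k => key m k (by omega)
  intro d
  induction d with
  | zero => intro k hk; rw [hu k hk, hw k hk]
  | succ d ih =>
    intro k hk
    by_cases hkm : m ≤ k
    · rw [hu k hkm, hw k hkm]
    · have hk' := h k (by omega)
      rw [ih (k + 1) (by omega)] at hk'
      exact add_right_cancel hk'

lemma matT_injective {n1 n2 n3 : ℕ} : Function.Injective (matT : Tensor n1 n2 n3 → _) := by
  intro A B h
  have hslice : ∀ a b, sliceEntry A a b = sliceEntry B a b := fun a b =>
    eq_of_add_succ_eq (fun _ => sliceEntry_eq_zero_of_le A a b)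
      (fun _ => sliceEntry_eq_zero_of_le B a b) fun k hk => by
        have hk0 := congrFun (congrFun h (⟨k, hk⟩, a)) (⟨0, by omega⟩, b)
        rwa [matT_apply_zero, matT_apply_zero] at hk0
  funext i
  ext a b
  simpa [sliceEntry] using congrFun (hslice a b) i

lemma matT_conjT {n1 n2 n3 : ℕ} (A : Tensor n1 n2 n3) : matT (conjT A) = (matT A)ᴴ := by
  ext ⟨i, a⟩ ⟨j, b⟩
  rw [conjTranspose_apply, matT_apply, matT_apply, toeplitzPlusHankel_comm n3 _ j]
  simp only [toeplitzPlusHankel, sliceEntry, conjT, star_add, apply_dite star, star_zero]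
  rfl

lemma cmul_assoc {n1 n2 n3 n4 n : ℕ} (A : Tensor n1 n2 n) (B : Tensor n2 n3 n)
    (C : Tensor n3 n4 n) : cmul (cmul A B) C = cmul A (cmul B C) :=
  matT_injective <| by simp only [matT_cmul, Matrix.mul_assoc]

lemma conjT_conjT {n1 n2 n3 : ℕ} (A : Tensor n1 n2 n3) : conjT (conjT A) = A :=
  funext fun i => conjTranspose_conjTranspose (A i)

lemma conjT_cmul {n1 n2 l n3 : ℕ} (A : Tensor n1 n2 n3) (B : Tensor n2 l n3) :
    conjT (cmul A B) = cmul (conjT B) (conjT A) :=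
  matT_injective <| by simp only [matT_conjT, matT_cmul, conjTranspose_mul]

end Tensor

theorem stmt17 {n1 n2 n3 : ℕ} (A : Tensor n1 n2 n3)
    (G X1 X2 : Tensor n2 n1 n3)
    (h1 : IsInvAlong A G X1) (h2 : IsInvAlong A G X2) :
    X1 = X2 := by
  obtain ⟨hX1AG, -, -, V, hV⟩ := h1
  obtain ⟨-, hGAX2, ⟨U, hU⟩, -⟩ := h2
  have hX1 : X1 = cmul (conjT V) G := by
    rw [← conjT_conjT X1, hV, conjT_cmul, conjT_conjT]
  calc X1 = cmul (conjT V) (cmul (cmul G A) X2) := by rw [hGAX2, hX1]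
    _ = cmul (cmul X1 A) X2 := by rw [hX1]; simp only [cmul_assoc]
    _ = cmul (cmul (cmul X1 A) G) U := by rw [hU]; simp only [cmul_assoc]
    _ = X2 := by rw [hX1AG, hU]
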